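/- Let d ≥ 3. There exists no non-bipartite (d+1)-colored graph (Γ,γ) with ω_G(Γ) < ⌈d!/4⌉; equivalently, every non-bipartite (d+1)-colored graph satisfies ω_G(Γ) ≥ ⌈d!/4⌉ (where ⌈x⌉ denotes the least integer greater than or equal to x). -/

import Mathlib

/-!
Basic framework: edge-colored graphs à la crystallization theory.

A `(d+1)`-colored graph (finite connected multigraph, regular of degree `d+1`, with a proper
edge-coloring by the color set `C`, `#C = d+1`) is encoded by giving, for each color `c`,
the perfect matching formed by the `c`-colored edges, i.e. a fixed-point-free involution
`inv c` on the vertex set `V` (connectedness is the separate predicate `Conn`).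
-/

structure CGraph (C V : Type) where
  inv : C → V → V
  invol : ∀ c v, inv c (inv c v) = v
  no_fixed : ∀ c v, inv c v ≠ v

namespace CGraph

variable {C V : Type}

/-- `g G B` = number of connected components of the spanning subgraph `Γ_B` consisting of
the edges whose color lies in `B`. -/
noncomputable def g (G : CGraph C V) (B : Set C) : ℕ :=
  Nat.card (Quotient (Relation.EqvGen.setoid (fun v w : V => ∃ c ∈ B, G.inv c v = w)))

/-- connectedness of the colored graph -/
def Conn (G : CGraph C V) : Prop := G.g Set.univ = 1

/-- the spanning subgraph `Γ_B` of edges colored in `B`, as a colored graph with color set `B` -/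
def restrict (G : CGraph C V) (B : Set C) : CGraph B V where
  inv c v := G.inv c.val v
  invol c v := G.invol c.val v
  no_fixed c v := G.no_fixed c.val v

/-- reachability in the colored graph -/
def reach (G : CGraph C V) : V → V → Prop :=
  Relation.EqvGen (fun v w : V => ∃ c, G.inv c v = w)

/-- the connected component of `G` containing `v0`, as a colored graph on the vertices
reachable from `v0` -/
def component (G : CGraph C V) (v0 : V) : CGraph C {w : V // G.reach v0 w} where
  inv c w := ⟨G.inv c w.val,
    Relation.EqvGen.trans _ _ _ w.property (Relation.EqvGen.rel _ _ ⟨c, rfl⟩)⟩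
  invol c w := Subtype.ext (G.invol c w.val)
  no_fixed c w h := G.no_fixed c w.val (congrArg Subtype.val h)

/-- A cyclic permutation of the (finite) color set: a permutation consisting of a single cycle
through all the colors.  Cyclic permutations `ε = (ε_0, …, ε_d)` of the color set, up to
rotation, correspond bijectively to such permutations `σ` (via `σ : ε_j ↦ ε_{j+1}`), and
taking the inverse cyclic permutation corresponds to `σ ↦ σ⁻¹`. -/
def IsCyclicPerm (σ : Equiv.Perm C) : Prop := σ.IsCycle ∧ ∀ c, σ c ≠ c

/-- Euler characteristic `χ_σ(Γ) = Σ_{j} g_{ε_j ε_{j+1}} + (1-(n-1))·p` of the surface of the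
regular embedding associated with the cyclic permutation `σ`; here `n = #C`, the graph has
order `2p` (i.e. `p = (#V)/2`), and the consecutive pairs `{ε_j, ε_{j+1}}` are exactly the
pairs `{c, σ c}`, `c ∈ C`. -/
noncomputable def chi (G : CGraph C V) (σ : Equiv.Perm C) : ℚ :=
  (∑ᶠ c : C, (G.g {c, σ c} : ℚ)) +
    (2 - (Nat.card C : ℚ)) * ((Nat.card V : ℚ) / 2)

/-- the genus `ρ_σ` of the regular embedding associated with `σ`:
for a connected graph it is `(2 - χ_σ)/2`; in general (`g G Set.univ` connected components)
it is the sum of the genera of the connected components, matching the convention that the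
genus/G-degree of a disconnected colored graph is the sum over its connected components. -/
noncomputable def rho (G : CGraph C V) (σ : Equiv.Perm C) : ℚ :=
  (2 * (G.g Set.univ : ℚ) - G.chi σ) / 2

/-- the Gurau degree `ω_G(Γ) = Σ ρ_ε(Γ)`, the sum over the cyclic permutations of the color
set up to inverse; each class `{σ, σ⁻¹}` has `ρ_σ = ρ_{σ⁻¹}`, whence the division by `2`. -/
noncomputable def omegaG (G : CGraph C V) : ℚ :=
  (∑ᶠ σ : {σ : Equiv.Perm C // IsCyclicPerm σ}, G.rho σ.val) / 2

/-- bipartiteness -/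
def Bipartite (G : CGraph C V) : Prop := ∃ f : V → Bool, ∀ c v, f (G.inv c v) ≠ f v

/-- color-preserving isomorphism of colored graphs -/
def IsIso {V' : Type} (G : CGraph C V) (G' : CGraph C V') : Prop :=
  ∃ e : V ≃ V', ∀ c v, e (G.inv c v) = G'.inv c (e v)

end CGraph

/-!
Fix a cyclic order `ε` of the colours and let `τ_j = γ_{ε_{j+1}} γ_{ε_j}` be the products of
consecutive colour involutions, as permutations of the `n = 2p` vertices. They multiply to `1`,
and every `{ε_j, ε_{j+1}}`-coloured cycle splits into two cycles of `τ_j`. If `Γ` is connected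
and not bipartite, any two vertices are joined by a walk of even length, so the `τ_j` generate a
transitive group, and the Riemann–Hurwitz inequality `∑_j (n - #cycles τ_j) ≥ 2 (n - 1)` gives
`χ_ε ≤ 1`, i.e. `ρ_ε ≥ 1/2`. Summing over the `d!` cyclic permutations, each class `{σ, σ⁻¹}`
counted twice, gives `ω_G ≥ d!/4`, an integer for `d ≥ 4`. For `d = 3` double counting gives
`ω_G = 3 + 3p - ∑_{i<j} g_{ij}`, an integer, so `ω_G ≥ 3/2` forces `ω_G ≥ 2`.
-/

open Relation

section Classes

variable {V : Type*}

noncomputable def numClasses (r : V → V → Prop) : ℕ :=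
  Nat.card (Quotient (EqvGen.setoid r))

theorem numClasses_congr {r s : V → V → Prop} (h : EqvGen r = EqvGen s) :
    numClasses r = numClasses s :=
  Nat.card_congr (Quotient.congr (Equiv.refl V) fun a b => Iff.of_eq (congrFun₂ h a b))

theorem numClasses_le_of_le [Finite V] {r s : V → V → Prop} (h : r ≤ EqvGen s) :
    numClasses s ≤ numClasses r :=
  Nat.card_le_card_of_surjective (Quotient.map' id (EqvGen.eqvGen_le h))
    (Quotient.ind fun v => ⟨Quotient.mk _ v, rfl⟩)

theorem numClasses_le_card [Finite V] (r : V → V → Prop) : numClasses r ≤ Nat.card V :=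
  Nat.card_le_card_of_surjective _ Quotient.mk_surjective

theorem numClasses_eq_card [Finite V] {r : V → V → Prop} (h : r ≤ Eq) :
    numClasses r = Nat.card V :=
  le_antisymm (numClasses_le_card r) <| Nat.card_le_card_of_injective (Quotient.mk _)
    fun a b hab => EqvGen.eqvGen_le h a b (Quotient.exact hab)

theorem numClasses_eq_one [Nonempty V] {r : V → V → Prop} (h : ∀ a b, EqvGen r a b) :
    numClasses r = 1 :=
  Nat.card_eq_one_iff_unique.mpr ⟨⟨Quotient.ind₂ fun a b => Quotient.sound (h a b)⟩,
    ⟨Quotient.mk _ (Classical.arbitrary V)⟩⟩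

def addEdge (r : V → V → Prop) (x y : V) : V → V → Prop := fun a b => r a b ∨ (a = x ∧ b = y)

theorem le_addEdge (r : V → V → Prop) (x y : V) : r ≤ addEdge r x y := fun _ _ => Or.inl

theorem eqvGen_addEdge_eq {r : V → V → Prop} {x y : V} (h : EqvGen r x y) :
    EqvGen (addEdge r x y) = EqvGen r := by
  refine le_antisymm (EqvGen.eqvGen_le ?_) (EqvGen.mono (le_addEdge r x y))
  rintro a b (hab | ⟨rfl, rfl⟩)
  exacts [EqvGen.rel a b hab, h]

theorem numClasses_addEdge_of_eqvGen {r : V → V → Prop} {x y : V} (h : EqvGen r x y) :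
    numClasses (addEdge r x y) = numClasses r :=
  numClasses_congr (eqvGen_addEdge_eq h)

/-- Sending the `r`-class of `y` to `x` turns `addEdge r x y`-steps into `r`-equivalences. -/
theorem eqvGen_of_eqvGen_addEdge {r : V → V → Prop} {x y a b : V}
    (h : EqvGen (addEdge r x y) a b) (ha : ¬EqvGen r a y) (hb : ¬EqvGen r b y) :
    EqvGen r a b := by
  classical
  have E := EqvGen.is_equivalence r
  let ψ : V → V := fun v => if EqvGen r v y then x else v
  have hψ : addEdge r x y ≤ fun a b => EqvGen r (ψ a) (ψ b) := by
    rintro a b (hab | ⟨ha, hb⟩)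
    · by_cases hay : EqvGen r a y
      · have hby : EqvGen r b y := E.trans (E.symm (EqvGen.rel a b hab)) hay
        simp only [ψ, if_pos hay, if_pos hby]
        exact EqvGen.refl x
      · have hby : ¬EqvGen r b y := fun hby => hay (E.trans (EqvGen.rel a b hab) hby)
        simp only [ψ, if_neg hay, if_neg hby]
        exact EqvGen.rel a b hab
    · simp only [ψ, ha, hb, if_pos (E.refl y)]
      split_ifs <;> exact E.refl _
  have hequiv : Equivalence fun a b => EqvGen r (ψ a) (ψ b) :=
    ⟨fun _ => E.refl _, E.symm, E.trans⟩
  simpa [ψ, ha, hb] using hequiv.eqvGen_iff.mp (EqvGen.mono hψ a b h)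

theorem numClasses_addEdge_add_one [Finite V] {r : V → V → Prop} {x y : V}
    (hxy : ¬EqvGen r x y) : numClasses (addEdge r x y) + 1 = numClasses r := by
  classical
  let Q := Quotient (EqvGen.setoid r)
  let φ : {q : Q // q ≠ Quotient.mk _ y} → Quotient (EqvGen.setoid (addEdge r x y)) :=
    fun q => Quotient.map' id (EqvGen.mono (le_addEdge r x y)) q.1
  have hφ : Function.Bijective φ := by
    constructor
    · rintro ⟨qa, hqa⟩ ⟨qb, hqb⟩ h
      induction qa using Quotient.ind
      induction qb using Quotient.ind
      exact Subtype.ext <| Quotient.sound <| eqvGen_of_eqvGen_addEdge (Quotient.exact h)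
        (fun h' => hqa (Quotient.sound h')) (fun h' => hqb (Quotient.sound h'))
    · refine Quotient.ind fun v => ?_
      by_cases hv : EqvGen r v y
      · refine ⟨⟨Quotient.mk _ x, fun h => hxy (Quotient.exact h)⟩, Quotient.sound ?_⟩
        exact (EqvGen.is_equivalence _).trans (EqvGen.rel x y (Or.inr ⟨rfl, rfl⟩))
          (EqvGen.mono (le_addEdge r x y) _ _ ((EqvGen.is_equivalence r).symm hv))
      · exact ⟨⟨Quotient.mk _ v, fun h => hv (Quotient.exact h)⟩, rfl⟩
  unfold numClasses
  rw [← Nat.card_congr (Equiv.ofBijective φ hφ), ← Finite.card_option,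
    Nat.card_congr (Equiv.optionSubtypeNe _)]

theorem numClasses_addEdge_le [Finite V] (r : V → V → Prop) (x y : V) :
    numClasses (addEdge r x y) ≤ numClasses r :=
  numClasses_le_of_le fun a b h => EqvGen.rel a b (Or.inl h)

theorem numClasses_le_numClasses_addEdge_add_one [Finite V] (r : V → V → Prop) (x y : V) :
    numClasses r ≤ numClasses (addEdge r x y) + 1 := by
  by_cases h : EqvGen r x y
  · rw [numClasses_addEdge_of_eqvGen h]; omega
  · rw [numClasses_addEdge_add_one h]

theorem two_mul_numClasses_le [Finite V] {r s : V → V → Prop} (f : V → V)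
    (hrs : r ≤ EqvGen s) (hs : ∀ v, EqvGen s v (f v)) (hr : ∀ v, ¬EqvGen r v (f v)) :
    2 * numClasses s ≤ numClasses r := by
  let φ : Quotient (EqvGen.setoid r) → Quotient (EqvGen.setoid s) :=
    Quotient.map' id (EqvGen.eqvGen_le hrs)
  let ι : Quotient (EqvGen.setoid s) ⊕ Quotient (EqvGen.setoid s) → Quotient (EqvGen.setoid r) :=
    Sum.elim (fun q => Quotient.mk _ q.out) (fun q => Quotient.mk _ (f q.out))
  have hφ : ∀ x, φ (ι x) = Sum.elim id id x := by
    rintro (q | q)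
    · exact Quotient.out_eq q
    · exact (Quotient.sound ((EqvGen.is_equivalence s).symm (hs q.out))).trans (Quotient.out_eq q)
  have hι : Function.Injective ι := by
    rintro (q₁ | q₁) (q₂ | q₂) h <;> have h' := congrArg φ h <;>
      simp only [hφ, Sum.elim_inl, Sum.elim_inr, id] at h' <;> subst h'
    · rfl
    · exact (hr _ (Quotient.exact h)).elim
    · exact (hr _ ((EqvGen.is_equivalence r).symm (Quotient.exact h))).elim
    · rfl
  calc 2 * numClasses s = Nat.card (Quotient (EqvGen.setoid s) ⊕ Quotient (EqvGen.setoid s)) := by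
        rw [Nat.card_sum, two_mul]; rfl
    _ ≤ numClasses r := Nat.card_le_card_of_injective ι hι

end Classes

section Permutations

open Equiv Equiv.Perm

variable {V : Type*}

def permRel (π : Perm V) : V → V → Prop := fun a b => π a = b

def listRel (l : List (Perm V)) : V → V → Prop := fun a b => ∃ π ∈ l, π a = b

noncomputable def numCycles (π : Perm V) : ℕ := numClasses (permRel π)

theorem numCycles_one [Finite V] : numCycles (1 : Perm V) = Nat.card V :=
  numClasses_eq_card fun _ _ h => h

theorem eqvGen_permRel_iff_sameCycle [Finite V] {π : Perm V} {a b : V} :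
    EqvGen (permRel π) a b ↔ π.SameCycle a b := by
  refine ⟨fun h => (SameCycle.equivalence π).eqvGen_iff.mp
    (EqvGen.mono (fun a b (hab : π a = b) => ⟨1, by simpa using hab⟩) a b h), fun h => ?_⟩
  obtain ⟨n, rfl⟩ := h.exists_nat_pow_eq
  clear h
  induction n with
  | zero => exact EqvGen.refl a
  | succ n ih =>
    rw [pow_succ', Perm.mul_apply]
    exact (EqvGen.is_equivalence _).trans ih (EqvGen.rel _ _ rfl)

theorem listRel_mono {l l' : List (Perm V)} (h : l ⊆ l') : listRel l ≤ listRel l' :=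
  fun _ _ ⟨π, hπ, hab⟩ => ⟨π, h hπ, hab⟩

theorem eqvGen_listRel_prod (l : List (Perm V)) (a : V) : EqvGen (listRel l) a (l.prod a) := by
  induction l with
  | nil => exact EqvGen.refl a
  | cons π l ih =>
    rw [List.prod_cons, Perm.mul_apply]
    exact (EqvGen.is_equivalence _).trans
      (EqvGen.mono (listRel_mono (List.subset_cons_self π l)) _ _ ih)
      (EqvGen.rel _ _ ⟨π, List.mem_cons_self, rfl⟩)

theorem eqvGen_listRel_of_sameCycle_prod [Finite V] {l : List (Perm V)} {a b : V}
    (h : l.prod.SameCycle a b) : EqvGen (listRel l) a b :=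
  EqvGen.eqvGen_le (fun a b (hab : l.prod a = b) => hab ▸ eqvGen_listRel_prod l a) a b
    (eqvGen_permRel_iff_sameCycle.mpr h)

variable [DecidableEq V]

theorem eqvGen_listRel_cons_swap (x y : V) (l : List (Perm V)) :
    EqvGen (listRel (swap x y :: l)) = EqvGen (addEdge (listRel l) x y) := by
  have E := EqvGen.is_equivalence (addEdge (listRel l) x y)
  refine le_antisymm (EqvGen.eqvGen_le ?_) (EqvGen.eqvGen_le ?_)
  · rintro a b ⟨π, hπ, rfl⟩
    rcases List.mem_cons.mp hπ with rfl | hπ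
    · rw [swap_apply_def]
      split_ifs with hx hy
      · exact EqvGen.rel _ _ (Or.inr ⟨hx, rfl⟩)
      · exact E.symm (EqvGen.rel _ _ (Or.inr ⟨rfl, hy⟩))
      · exact E.refl a
    · exact EqvGen.rel _ _ (Or.inl ⟨π, hπ, rfl⟩)
  · rintro a b (hab | ⟨rfl, rfl⟩)
    · exact EqvGen.mono (listRel_mono (List.subset_cons_self _ l)) _ _ (EqvGen.rel _ _ hab)
    · exact EqvGen.rel _ _ ⟨swap a b, List.mem_cons_self, swap_apply_left a b⟩

theorem addEdge_permRel_swap_mul_le (x y : V) (σ : Perm V) :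
    addEdge (permRel (swap x y * σ)) x y ≤ EqvGen (addEdge (permRel σ) x y) := by
  have E := EqvGen.is_equivalence (addEdge (permRel σ) x y)
  have hσ : ∀ a, EqvGen (addEdge (permRel σ) x y) a (σ a) := fun a => EqvGen.rel _ _ (Or.inl rfl)
  have hxy : EqvGen (addEdge (permRel σ) x y) x y := EqvGen.rel _ _ (Or.inr ⟨rfl, rfl⟩)
  rintro a b (rfl | hab)
  · rw [Perm.mul_apply, swap_apply_def]
    split_ifs with hx hy
    · exact E.trans (hx ▸ hσ a) hxy
    · exact E.trans (hy ▸ hσ a) (E.symm hxy)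
    · exact hσ a
  · exact EqvGen.rel _ _ (Or.inr hab)

theorem eqvGen_addEdge_permRel_swap_mul (x y : V) (σ : Perm V) :
    EqvGen (addEdge (permRel (swap x y * σ)) x y) = EqvGen (addEdge (permRel σ) x y) := by
  refine le_antisymm (EqvGen.eqvGen_le (addEdge_permRel_swap_mul_le x y σ)) (EqvGen.eqvGen_le ?_)
  simpa using addEdge_permRel_swap_mul_le x y (swap x y * σ)

theorem numCycles_swap_mul_le [Finite V] (x y : V) (σ : Perm V) :
    numCycles (swap x y * σ) ≤ numCycles σ + 1 :=
  calc numCycles (swap x y * σ) ≤ numClasses (addEdge (permRel (swap x y * σ)) x y) + 1 :=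
        numClasses_le_numClasses_addEdge_add_one _ x y
    _ = numClasses (addEdge (permRel σ) x y) + 1 := by
        rw [numClasses_congr (eqvGen_addEdge_permRel_swap_mul x y σ)]
    _ ≤ numCycles σ + 1 := by gcongr; exact numClasses_addEdge_le _ x y

/-- Walking along the `σ`-cycle of `x`, which avoids `y`, the permutation `swap x y * σ` agrees
with `σ` until it reaches `σ⁻¹ x`, which it sends to `y`. -/
theorem sameCycle_swap_mul_of_not_sameCycle [Finite V] {x y : V} {σ : Perm V}
    (h : ¬σ.SameCycle x y) : (swap x y * σ).SameCycle x y := by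
  have hpow : ∀ k : ℕ, (swap x y * σ).SameCycle x ((σ ^ k) x) := by
    intro k
    induction k with
    | zero => exact SameCycle.refl _ _
    | succ k ih =>
      rw [pow_succ', Perm.mul_apply]
      have hy : σ ((σ ^ k) x) ≠ y := fun hy =>
        h ⟨(k + 1 : ℕ), by rw [zpow_natCast, pow_succ', Perm.mul_apply, hy]⟩
      by_cases hx : σ ((σ ^ k) x) = x
      · rw [hx]
      · have hτ : (swap x y * σ) ((σ ^ k) x) = σ ((σ ^ k) x) := by
          rw [Perm.mul_apply, swap_apply_of_ne_of_ne hx hy]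
        rw [← hτ]
        exact sameCycle_apply_right.mpr ih
  obtain ⟨k, hk⟩ := (show σ.SameCycle x (σ⁻¹ x) from ⟨-1, by simp⟩).exists_nat_pow_eq
  have hτ : (swap x y * σ) (σ⁻¹ x) = y := by simp
  have := sameCycle_apply_right.mpr (hpow k)
  rwa [hk, hτ] at this

theorem numCycles_swap_mul_add_one [Finite V] {x y : V} {σ : Perm V} (h : ¬σ.SameCycle x y) :
    numCycles (swap x y * σ) + 1 = numCycles σ := by
  have hτ : EqvGen (permRel (swap x y * σ)) x y :=
    eqvGen_permRel_iff_sameCycle.mpr (sameCycle_swap_mul_of_not_sameCycle h)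
  rw [numCycles, ← numClasses_addEdge_of_eqvGen hτ,
    numClasses_congr (eqvGen_addEdge_permRel_swap_mul x y σ)]
  exact numClasses_addEdge_add_one (mt eqvGen_permRel_iff_sameCycle.mp h)

theorem exists_swap_factorization [Finite V] (σ : Perm V) :
    ∃ l : List (Perm V), (∀ τ ∈ l, ∃ x y, τ = swap x y) ∧ l.prod = σ ∧
      l.length + numCycles σ ≤ Nat.card V := by
  induction hk : Nat.card V - numCycles σ using Nat.strong_induction_on generalizing σ with
  | _ k ih =>
  by_cases hσ : σ = 1
  · exact ⟨[], by simp, by simp [hσ], by simp [hσ, numCycles_one]⟩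
  obtain ⟨x, hx⟩ : ∃ x, σ x ≠ x := by
    by_contra! h
    exact hσ (Perm.ext h)
  set β := swap x (σ x) * σ
  have hβ : swap x (σ x) * β = σ := swap_mul_self_mul _ _ _
  have hβx : ¬β.SameCycle x (σ x) := fun h => hx (h.eq_of_left (show β x = x by simp [β])).symm
  have hcyc := numCycles_swap_mul_add_one hβx
  rw [hβ] at hcyc
  have hβcard : numCycles β ≤ Nat.card V := numClasses_le_card _
  obtain ⟨l, hl, hprod, hlen⟩ := ih _ (by omega) β rfl
  refine ⟨swap x (σ x) :: l, ?_, by rw [List.prod_cons, hprod, hβ], by simp only [List.length_cons]; omega⟩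
  rintro τ (_ | ⟨_, hτ⟩)
  exacts [⟨x, σ x, rfl⟩, hl τ hτ]

theorem numCycles_prod_add_le [Finite V] (l : List (Perm V))
    (hl : ∀ τ ∈ l, ∃ x y, τ = swap x y) :
    numCycles l.prod + 2 * Nat.card V ≤ l.length + Nat.card V + 2 * numClasses (listRel l) := by
  induction l with
  | nil =>
    rw [List.prod_nil, numCycles_one, numClasses_eq_card fun _ _ ⟨_, h, _⟩ => (List.not_mem_nil h).elim, List.length_nil]
    omega
  | cons τ l ih =>
    obtain ⟨x, y, rfl⟩ := hl τ List.mem_cons_self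
    have ih := ih fun τ hτ => hl τ (List.mem_cons_of_mem _ hτ)
    rw [List.prod_cons, List.length_cons, numClasses_congr (eqvGen_listRel_cons_swap x y l)]
    by_cases h : l.prod.SameCycle x y
    · have := numCycles_swap_mul_le x y l.prod
      rw [numClasses_addEdge_of_eqvGen (eqvGen_listRel_of_sameCycle_prod h)]
      omega
    · have := numCycles_swap_mul_add_one h
      have := numClasses_le_numClasses_addEdge_add_one (listRel l) x y
      omega

end Permutations

/-- Riemann–Hurwitz inequality. Factoring each `π ∈ L` into `#V - numCycles π` transpositions
reduces it to `numCycles_prod_add_le`, where each transposition either splits a cycle of the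
product or merges two orbits. -/
theorem sum_numCycles_add_le {V : Type*} [Finite V] (L : List (Equiv.Perm V)) (hL : L.prod = 1) :
    (L.map numCycles).sum + 2 * Nat.card V ≤ L.length * Nat.card V + 2 * numClasses (listRel L) := by
  classical
  choose f hswap hprod hlen using exists_swap_factorization (V := V)
  let F := L.flatMap f
  have hF := numCycles_prod_add_le F fun τ hτ => by
    obtain ⟨π, -, hτ⟩ := List.mem_flatMap.mp hτ
    exact hswap π τ hτ
  have hFprod : F.prod = 1 := by
    have : List.prod ∘ f = id := funext hprod
    simp [F, List.flatMap, List.prod_flatten, this, hL]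
  have hFclasses : numClasses (listRel F) ≤ numClasses (listRel L) := by
    refine numClasses_le_of_le fun a b ⟨π, hπ, hab⟩ => ?_
    rw [← hab, ← hprod π]
    exact EqvGen.mono (listRel_mono fun τ hτ => List.mem_flatMap.mpr ⟨π, hπ, hτ⟩) _ _ (eqvGen_listRel_prod _ a)
  have hFlen : F.length + (L.map numCycles).sum ≤ L.length * Nat.card V := by
    rw [List.length_flatMap, ← List.sum_map_add]
    calc _ ≤ (L.map fun _ => Nat.card V).sum := List.sum_le_sum fun π _ => hlen π
      _ = _ := by simp
  rw [hFprod, numCycles_one] at hF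
  omega


namespace CGraph

open Equiv Equiv.Perm

variable {C V : Type}

def perm (G : CGraph C V) (c : C) : Perm V := ⟨G.inv c, G.inv c, G.invol c, G.invol c⟩

@[simp]
theorem perm_apply (G : CGraph C V) (c : C) (v : V) : G.perm c v = G.inv c v := rfl

theorem perm_mul_self (G : CGraph C V) (c : C) : G.perm c * G.perm c = 1 :=
  Equiv.ext (G.invol c)

theorem g_eq_numClasses (G : CGraph C V) (B : Set C) :
    G.g B = numClasses fun v w => ∃ c ∈ B, G.inv c v = w := rfl

theorem even_card [Finite V] (G : CGraph C V) (c : C) : Even (Nat.card V) := by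
  classical
  have := Fintype.ofFinite V
  have hsupp : (G.perm c).support = Finset.univ :=
    Finset.eq_univ_iff_forall.mpr fun v => mem_support.mpr (G.no_fixed c v)
  have h := two_dvd_card_support (σ := G.perm c) (by rw [sq, perm_mul_self])
  rwa [hsupp, Finset.card_univ, ← Nat.card_eq_fintype_card, ← even_iff_two_dvd] at h

/-- `G.perm c'` and `G.perm c` act on the cycles of their product `τ` as reflections, so
`G.inv c v = τ ^ j v` would give a fixed point of `G.inv c` (if `j` is even) or of `G.inv c'`
(if `j` is odd) halfway along. -/
theorem not_sameCycle_inv (G : CGraph C V) (c c' : C) (v : V) :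
    ¬(G.perm c' * G.perm c).SameCycle v (G.inv c v) := by
  rintro ⟨j, hj⟩
  set a := G.perm c'
  set b := G.perm c
  set τ := a * b
  have hb : b⁻¹ = b := inv_eq_of_mul_eq_one_right (G.perm_mul_self c)
  have ha : a⁻¹ = a := inv_eq_of_mul_eq_one_right (G.perm_mul_self c')
  have hconj : SemiconjBy b τ τ⁻¹ := by
    simp only [SemiconjBy, τ, mul_inv_rev, ha, hb, ← mul_assoc]
  have hreflect : ∀ k : ℤ, b ((τ ^ k) v) = (τ ^ (j - k)) v := by
    intro k
    rw [← Perm.mul_apply, (hconj.zpow_right k).eq, Perm.mul_apply, perm_apply, ← hj, inv_zpow',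
      ← Perm.mul_apply, ← zpow_add, neg_add_eq_sub]
  obtain ⟨m, rfl | rfl⟩ := Int.even_or_odd' j
  · exact G.no_fixed c ((τ ^ m) v) ((hreflect m).trans (by ring_nf))
  · have haτ : a = τ * b := by rw [mul_assoc, G.perm_mul_self c, mul_one]
    apply G.no_fixed c' ((τ ^ (m + 1)) v)
    calc a ((τ ^ (m + 1)) v) = τ (b ((τ ^ (m + 1)) v)) := by rw [haτ]; rfl
      _ = τ ((τ ^ (2 * m + 1 - (m + 1))) v) := by rw [hreflect]
      _ = (τ ^ (m + 1)) v := by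
        rw [← Perm.mul_apply, ← zpow_one_add]
        congr 2
        ring

/-- Each bicoloured `{c, c'}`-cycle of `G` splits into two cycles of `G.perm c' * G.perm c`. -/
theorem two_mul_g_pair_le [Finite V] (G : CGraph C V) (c c' : C) :
    2 * G.g {c, c'} ≤ numCycles (G.perm c' * G.perm c) := by
  refine two_mul_numClasses_le (G.inv c) ?_ (fun v => EqvGen.rel _ _ ⟨c, by simp, rfl⟩)
    fun v h => G.not_sameCycle_inv c c' v (eqvGen_permRel_iff_sameCycle.mp h)
  rintro v w rfl
  exact (EqvGen.is_equivalence _).trans (EqvGen.rel _ _ ⟨c, by simp, rfl⟩)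
    (EqvGen.rel _ _ ⟨c', by simp, rfl⟩)

end CGraph

namespace CGraph

open Equiv Equiv.Perm

variable {C V : Type}

/-- `EqvGen G.twoStep` is joinability by walks of even length. -/
def twoStep (G : CGraph C V) : V → V → Prop := fun v w => ∃ c c', G.inv c' (G.inv c v) = w

theorem twoStep_inv_inv (G : CGraph C V) (c c' : C) (v : V) :
    EqvGen G.twoStep v (G.inv c' (G.inv c v)) :=
  EqvGen.rel _ _ ⟨c, c', rfl⟩

theorem eqvGen_twoStep_inv_inv (G : CGraph C V) (c c' : C) (v : V) :
    EqvGen G.twoStep (G.inv c v) (G.inv c' v) := by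
  simpa [G.invol] using G.twoStep_inv_inv c c' (G.inv c v)

theorem eqvGen_twoStep_inv (G : CGraph C V) {v w : V} (h : EqvGen G.twoStep v w) (c : C) :
    EqvGen G.twoStep (G.inv c v) (G.inv c w) := by
  have E := EqvGen.is_equivalence G.twoStep
  induction h with
  | rel a b hab =>
    obtain ⟨c₁, c₂, rfl⟩ := hab
    exact E.trans (G.eqvGen_twoStep_inv_inv c c₁ a)
      (by simpa [G.invol] using G.twoStep_inv_inv c₂ c (G.inv c₁ a))
  | refl a => exact E.refl _
  | symm a b _ ih => exact E.symm ih
  | trans a b x _ _ ih₁ ih₂ => exact E.trans ih₁ ih₂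

theorem Conn.eqvGen {G : CGraph C V} (hconn : G.Conn) (v w : V) :
    EqvGen (fun v w => ∃ c ∈ Set.univ, G.inv c v = w) v w := by
  obtain ⟨hsub, -⟩ := Nat.card_eq_one_iff_unique.mp hconn
  exact Quotient.exact (Subsingleton.elim (α := Quotient (EqvGen.setoid _)) ⟦v⟧ ⟦w⟧)

theorem Conn.nonempty {G : CGraph C V} (hconn : G.Conn) : Nonempty V := by
  obtain ⟨-, ⟨q⟩⟩ := Nat.card_eq_one_iff_unique.mp hconn
  exact ⟨q.out⟩

theorem eqvGen_twoStep_or (G : CGraph C V) {v w : V}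
    (h : EqvGen (fun v w => ∃ c ∈ Set.univ, G.inv c v = w) v w) :
    EqvGen G.twoStep v w ∨ ∃ c, EqvGen G.twoStep v (G.inv c w) := by
  have E := EqvGen.is_equivalence G.twoStep
  induction h with
  | rel a b hab =>
    obtain ⟨c, -, rfl⟩ := hab
    exact Or.inr ⟨c, by rw [G.invol]; exact E.refl a⟩
  | refl a => exact Or.inl (E.refl a)
  | symm a b _ ih =>
    rcases ih with h | ⟨c, h⟩
    · exact Or.inl (E.symm h)
    · exact Or.inr ⟨c, E.symm (by simpa [G.invol] using G.eqvGen_twoStep_inv h c)⟩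
  | trans a b x _ _ ih₁ ih₂ =>
    rcases ih₁ with h₁ | ⟨c, h₁⟩ <;> rcases ih₂ with h₂ | ⟨c', h₂⟩
    · exact Or.inl (E.trans h₁ h₂)
    · exact Or.inr ⟨c', E.trans h₁ h₂⟩
    · exact Or.inr ⟨c, E.trans h₁ (G.eqvGen_twoStep_inv h₂ c)⟩
    · refine Or.inl (E.trans h₁ (E.trans (G.eqvGen_twoStep_inv h₂ c) ?_))
      simpa [G.invol] using G.twoStep_inv_inv c c' (G.inv c (G.inv c' x))

/-- Otherwise "joined to `v` by a walk of even length" would be a bipartition. -/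
theorem Conn.eqvGen_twoStep {G : CGraph C V} (hconn : G.Conn) (hnb : ¬G.Bipartite) (v w : V) :
    EqvGen G.twoStep v w := by
  classical
  have E := EqvGen.is_equivalence G.twoStep
  by_contra hvw
  have hodd : ∀ u c, EqvGen G.twoStep v u → ¬EqvGen G.twoStep v (G.inv c u) := by
    intro u c hu hcu
    rcases G.eqvGen_twoStep_or (hconn.eqvGen u w) with h | ⟨c', h⟩
    · exact hvw (E.trans hu h)
    · refine hvw (E.trans hcu (E.trans (G.eqvGen_twoStep_inv h c) ?_))
      simpa [G.invol] using G.twoStep_inv_inv c c' (G.inv c (G.inv c' w))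
  refine hnb ⟨fun u => decide (EqvGen G.twoStep v u), fun c u => ?_⟩
  rcases G.eqvGen_twoStep_or (hconn.eqvGen v u) with h | ⟨c', h⟩
  · simp [h, hodd u c h]
  · have hc : EqvGen G.twoStep v (G.inv c u) := E.trans h (G.eqvGen_twoStep_inv_inv c' c u)
    have hu : ¬EqvGen G.twoStep v u := fun hu => hodd u c hu hc
    simp [hc, hu]

end CGraph

namespace CGraph

open Equiv Equiv.Perm

section CyclicPerm

variable {C : Type} [Fintype C] [DecidableEq C] {σ : Perm C}

theorem IsCyclicPerm.support_eq_univ (hσ : IsCyclicPerm σ) : σ.support = Finset.univ :=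
  Finset.eq_univ_iff_forall.mpr fun c => mem_support.mpr (hσ.2 c)

theorem IsCyclicPerm.orderOf_eq (hσ : IsCyclicPerm σ) : orderOf σ = Fintype.card C := by
  rw [hσ.1.orderOf, hσ.support_eq_univ, Finset.card_univ]

theorem IsCyclicPerm.exists_pow_eq (hσ : IsCyclicPerm σ) (c₀ c : C) :
    ∃ j < Fintype.card C, (σ ^ j) c₀ = c := by
  rw [← hσ.orderOf_eq]
  exact (hσ.1.sameCycle (hσ.2 c₀) (hσ.2 c)).exists_pow_eq'

theorem IsCyclicPerm.sum_range_pow_apply {M : Type*} [AddCommMonoid M] (hσ : IsCyclicPerm σ)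
    (c₀ : C) (f : C → M) : ∑ j ∈ Finset.range (Fintype.card C), f ((σ ^ j) c₀) = ∑ c, f c := by
  have hbij : Function.Bijective fun j : Fin (Fintype.card C) => (σ ^ (j : ℕ)) c₀ := by
    refine (Fintype.bijective_iff_surjective_and_card _).mpr ⟨fun c => ?_, Fintype.card_fin _⟩
    obtain ⟨j, hj, h⟩ := hσ.exists_pow_eq c₀ c
    exact ⟨⟨j, hj⟩, h⟩
  rw [← Fin.sum_univ_eq_sum_range (fun j => f ((σ ^ j) c₀))]
  exact Fintype.sum_bijective _ hbij _ _ fun _ => rfl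

end CyclicPerm

variable {C V : Type}

/-- The permutations `G.perm ε_{j+1} * G.perm ε_j`, `j < n`, for the colour sequence
`ε_j = σ ^ j c₀`, listed so that their product telescopes. -/
def bicolorList (G : CGraph C V) (σ : Perm C) (c₀ : C) (n : ℕ) : List (Perm V) :=
  ((List.range n).map fun j => G.perm ((σ ^ (j + 1)) c₀) * G.perm ((σ ^ j) c₀)).reverse

theorem prod_bicolorList (G : CGraph C V) (σ : Perm C) (c₀ : C) (n : ℕ) :
    (G.bicolorList σ c₀ n).prod = G.perm ((σ ^ n) c₀) * G.perm c₀ := by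
  induction n with
  | zero => simp [bicolorList, perm_mul_self]
  | succ n ih =>
    rw [bicolorList, List.range_succ, List.map_append, List.reverse_append, List.prod_append,
      ← bicolorList, ih]
    simp [mul_assoc, ← mul_assoc (G.perm ((σ ^ n) c₀)), perm_mul_self]

theorem bicolorList_subset (G : CGraph C V) (σ : Perm C) (c₀ : C) {m n : ℕ} (h : m ≤ n) :
    G.bicolorList σ c₀ m ⊆ G.bicolorList σ c₀ n := by
  simpa [bicolorList] using List.map_subset _ (List.range_subset.mpr h)

theorem sum_map_numCycles_bicolorList (G : CGraph C V) (σ : Perm C) (c₀ : C) (n : ℕ) :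
    ((G.bicolorList σ c₀ n).map numCycles).sum =
      ∑ j ∈ Finset.range n, numCycles (G.perm ((σ ^ (j + 1)) c₀) * G.perm ((σ ^ j) c₀)) := by
  rw [bicolorList, List.map_reverse, List.sum_reverse, List.map_map, Finset.sum, Finset.range_val,
    Multiset.range, Multiset.map_coe, Multiset.sum_coe]
  rfl

variable [Fintype C] [DecidableEq C] {σ : Perm C}

theorem twoStep_le_eqvGen_listRel_bicolorList (G : CGraph C V) (hσ : IsCyclicPerm σ) (c₀ : C) :
    G.twoStep ≤ EqvGen (listRel (G.bicolorList σ c₀ (Fintype.card C))) := by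
  have E := EqvGen.is_equivalence (listRel (G.bicolorList σ c₀ (Fintype.card C)))
  have key : ∀ c u, EqvGen (listRel (G.bicolorList σ c₀ (Fintype.card C))) u
      (G.inv c (G.inv c₀ u)) := by
    intro c u
    obtain ⟨j, hj, rfl⟩ := hσ.exists_pow_eq c₀ c
    have h := eqvGen_listRel_prod (G.bicolorList σ c₀ j) u
    rw [prod_bicolorList] at h
    exact EqvGen.mono (listRel_mono (G.bicolorList_subset σ c₀ hj.le)) _ _ h
  rintro v _ ⟨c, c', rfl⟩
  have h₁ := key c (G.inv c₀ (G.inv c v))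
  have h₂ := key c' (G.inv c₀ (G.inv c v))
  simp only [G.invol] at h₁ h₂
  exact E.trans (E.symm h₁) h₂

/-- `χ_σ ≤ 1`, in the form `2 ∑_c g_{c,σc} + 2·#V ≤ #C·#V + 2`: the bicoloured permutations
multiply to `1` and generate a transitive group, so the Riemann–Hurwitz inequality applies,
and each `{c, σ c}`-cycle contributes two of their cycles. -/
theorem two_mul_sum_g_add_le [Finite V] {G : CGraph C V} (hconn : G.Conn)
    (hnb : ¬G.Bipartite) (hσ : IsCyclicPerm σ) :
    2 * ∑ c, G.g {c, σ c} + 2 * Nat.card V ≤ Fintype.card C * Nat.card V + 2 := by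
  obtain ⟨c₀, -⟩ := hσ.1
  set L := G.bicolorList σ c₀ (Fintype.card C)
  have hprod : L.prod = 1 := by
    rw [prod_bicolorList, ← hσ.orderOf_eq, pow_orderOf_eq_one, one_apply, perm_mul_self]
  have hone : numClasses (listRel L) = 1 := by
    have := hconn.nonempty
    exact numClasses_eq_one fun v w => EqvGen.eqvGen_le
      (G.twoStep_le_eqvGen_listRel_bicolorList hσ c₀) v w (hconn.eqvGen_twoStep hnb v w)
  have hmain := sum_numCycles_add_le L hprod
  rw [hone, sum_map_numCycles_bicolorList] at hmain
  have hlen : L.length = Fintype.card C := by simp [L, bicolorList]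
  have hfaces : 2 * ∑ c, G.g {c, σ c} ≤
      ∑ j ∈ Finset.range (Fintype.card C),
        numCycles (G.perm ((σ ^ (j + 1)) c₀) * G.perm ((σ ^ j) c₀)) := by
    rw [← hσ.sum_range_pow_apply c₀, Finset.mul_sum]
    refine Finset.sum_le_sum fun j _ => ?_
    rw [pow_succ', Perm.mul_apply]
    exact G.two_mul_g_pair_le _ _
  rw [hlen] at hmain
  omega

theorem chi_le_one [Finite V] {G : CGraph C V} (hconn : G.Conn) (hnb : ¬G.Bipartite)
    (hσ : IsCyclicPerm σ) : G.chi σ ≤ 1 := by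
  have h : (2 * ∑ c, G.g {c, σ c} + 2 * Nat.card V : ℚ) ≤ Fintype.card C * Nat.card V + 2 := by
    exact_mod_cast two_mul_sum_g_add_le hconn hnb hσ
  rw [chi, finsum_eq_sum_of_fintype, Nat.card_eq_fintype_card (α := C)]
  push_cast at h
  linarith

theorem one_half_le_rho [Finite V] {G : CGraph C V} (hconn : G.Conn) (hnb : ¬G.Bipartite)
    (hσ : IsCyclicPerm σ) : 1 / 2 ≤ G.rho σ := by
  have := chi_le_one hconn hnb hσ
  rw [rho, hconn]
  push_cast
  linarith

end CGraph

namespace CGraph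

open Equiv Equiv.Perm Finset

section CyclicPerms

variable {C : Type} [Fintype C] [DecidableEq C]

instance : DecidablePred (IsCyclicPerm : Perm C → Prop) := fun σ =>
  decidable_of_iff ((∃ x, σ x ≠ x ∧ ∀ y, σ y ≠ y → σ.SameCycle x y) ∧ ∀ c, σ c ≠ c) Iff.rfl

variable (C) in
def cyclicPerms : Finset (Perm C) := univ.filter IsCyclicPerm

theorem isCyclicPerm_iff_cycleType {σ : Perm C} :
    IsCyclicPerm σ ↔ σ.cycleType = {Fintype.card C} := by
  refine ⟨fun hσ => by rw [hσ.1.cycleType, hσ.support_eq_univ, card_univ], fun h => ?_⟩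
  have hsupp : σ.support = univ := eq_univ_of_card _ (by rw [← sum_cycleType, h]; simp)
  exact ⟨card_cycleType_eq_one.mp (by simp [h]),
    fun c => mem_support.mp (hsupp ▸ mem_univ c)⟩

theorem card_cyclicPerms (hC : 2 ≤ Fintype.card C) :
    #(cyclicPerms C) = (Fintype.card C - 1).factorial := by
  have h := card_of_cycleType (α := C) {Fintype.card C}
  simp only [Multiset.sum_singleton, le_refl, Multiset.mem_singleton, forall_eq, hC, and_self,
    if_true, Nat.sub_self, Nat.factorial_zero, one_mul, Multiset.prod_singleton,
    Multiset.toFinset_singleton, prod_singleton, Multiset.count_singleton_self, Nat.factorial_one,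
    mul_one] at h
  rw [cyclicPerms, filter_congr fun σ _ => isCyclicPerm_iff_cycleType, h]
  obtain ⟨n, hn⟩ : ∃ n, Fintype.card C = n + 1 := ⟨_, (Nat.sub_add_cancel (by omega)).symm⟩
  rw [hn, Nat.factorial_succ, Nat.mul_div_cancel_left _ n.succ_pos, Nat.add_sub_cancel]

end CyclicPerms

variable {C V : Type} [Fintype C] [DecidableEq C]

theorem omegaG_eq_sum (G : CGraph C V) : G.omegaG = (∑ σ ∈ cyclicPerms C, G.rho σ) / 2 := by
  rw [omegaG, finsum_eq_sum_of_fintype,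
    ← sum_subtype (cyclicPerms C) (by simp [cyclicPerms]) G.rho]

theorem card_cyclicPerms_div_four_le_omegaG [Finite V] {G : CGraph C V} (hconn : G.Conn)
    (hnb : ¬G.Bipartite) : (#(cyclicPerms C) : ℚ) / 4 ≤ G.omegaG := by
  have h := card_nsmul_le_sum (cyclicPerms C) G.rho (1 / 2)
    fun σ hσ => one_half_le_rho hconn hnb (mem_filter.mp hσ).2
  rw [nsmul_eq_mul] at h
  rw [omegaG_eq_sum]
  linarith

theorem card_filter_cyclicPerms_apply_eq_fin_four (c j : Fin 4) :
    #{σ ∈ cyclicPerms (Fin 4) | σ c = j} = if c = j then 0 else 2 := by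
  revert c j
  decide

theorem sum_cyclicPerms_fin_four (f : Fin 4 → Fin 4 → ℕ) (hf : ∀ i j, f i j = f j i) :
    ∑ σ ∈ cyclicPerms (Fin 4), ∑ c, f c (σ c) =
      4 * (f 0 1 + f 0 2 + f 0 3 + f 1 2 + f 1 3 + f 2 3) := by
  have hfiber : ∀ c, ∑ σ ∈ cyclicPerms (Fin 4), f c (σ c) = ∑ j, if c = j then 0 else 2 * f c j := by
    intro c
    rw [← sum_fiberwise (cyclicPerms (Fin 4)) (fun σ => σ c) (fun σ => f c (σ c))]
    refine sum_congr rfl fun j _ => ?_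
    rw [sum_congr rfl fun σ hσ => by rw [(mem_filter.mp hσ).2], sum_const,
      card_filter_cyclicPerms_apply_eq_fin_four, smul_eq_mul]
    split_ifs <;> ring
  rw [sum_comm]
  simp only [hfiber, Fin.sum_univ_four]
  simp only [Fin.isValue, ↓reduceIte, Fin.reduceEq]
  rw [hf 1 0, hf 2 0, hf 3 0, hf 2 1, hf 3 1, hf 3 2]
  ring

/-- For four colours, `ω_G = 3 + 3p - ∑_{i<j} g_{ij}`, the order being `2p`. -/
theorem exists_omegaG_eq_int_fin_four [Finite V] {G : CGraph (Fin 4) V} (hconn : G.Conn) :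
    ∃ z : ℤ, G.omegaG = z := by
  obtain ⟨p, hp⟩ := G.even_card 0
  set T := G.g {0, 1} + G.g {0, 2} + G.g {0, 3} + G.g {1, 2} + G.g {1, 3} + G.g {2, 3}
  have hS : ∑ σ ∈ cyclicPerms (Fin 4), ∑ c, (G.g {c, σ c} : ℚ) = 4 * T := by
    exact_mod_cast sum_cyclicPerms_fin_four (fun c j => G.g {c, j}) fun c j => by
      rw [Set.pair_comm]
  have hcard : #(cyclicPerms (Fin 4)) = 6 := card_cyclicPerms (by simp)
  have hρ : ∀ σ, G.rho σ = 1 + p - (∑ c, (G.g {c, σ c} : ℚ)) / 2 := by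
    intro σ
    rw [rho, chi, hconn, finsum_eq_sum_of_fintype, hp]
    simp
    ring
  refine ⟨3 + 3 * p - T, ?_⟩
  rw [omegaG_eq_sum, sum_congr rfl fun σ _ => hρ σ, sum_sub_distrib, ← sum_div, hS, sum_const,
    hcard]
  push_cast
  ring

end CGraph

open CGraph in
/-- Proposition `G-degree non-bipartite`: for `d ≥ 3`, every non-bipartite
`(d+1)`-colored graph satisfies `ω_G(Γ) ≥ ⌈d!/4⌉`. -/
theorem stmt1 {d : ℕ} (hd : 3 ≤ d) {V : Type} [Finite V]
    (G : CGraph (Fin (d + 1)) V) (hconn : G.Conn) (hnb : ¬ G.Bipartite) :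
    ((⌈(d.factorial : ℚ) / 4⌉ : ℤ) : ℚ) ≤ G.omegaG := by
  have hω : (d.factorial : ℚ) / 4 ≤ G.omegaG := by
    have h := card_cyclicPerms_div_four_le_omegaG hconn hnb
    rwa [card_cyclicPerms (by simp; omega), Fintype.card_fin, Nat.add_sub_cancel] at h
  rcases hd.eq_or_lt with rfl | hd
  · obtain ⟨z, hz⟩ := exists_omegaG_eq_int_fin_four hconn
    rw [hz] at hω ⊢
    exact_mod_cast Int.ceil_le.mpr hω
  · obtain ⟨k, hk⟩ := Nat.dvd_factorial (by norm_num : 0 < 4) hd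
    rw [hk, Nat.cast_mul, Nat.cast_ofNat, mul_div_cancel_left₀ _ (by norm_num : (4 : ℚ) ≠ 0)]
      at hω ⊢
    rwa [Int.ceil_natCast, Int.cast_natCast]
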